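/- arXiv:2502.10532 — 5 statements merged into one kernel-verified Lean document; each statement's English description precedes it below -/
import Mathlib

section
/- Let p ∈ ℕ, let S* be a configuration, let π be a probability mass function on the 2^p configurations with π(S) > 0 for all S, and suppose π(S*) ≥ 1 − ε for some ε ∈ (0,1). If φ̂ ∈ [0,1]^p minimizes φ ↦ KL(q_φ ∥ π) over [0,1]^p, then q_{φ̂}(S*) ≥ 1 − ε − √( (−log(1−ε)) / 2 ). -/
/-!
Plugging the indicator of `Sstar` into the minimality of `φhat` gives
`KL(q_φhat ∥ π) ≤ -log π(Sstar) ≤ -log (1 - ε)`. Merging all configurations other than `Sstar`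
(log-sum inequality) bounds the KL divergence from below by the binary divergence of
`q(Sstar)` from `π(Sstar)`, and the binary Pinsker inequality bounds that by
`2 (q(Sstar) - π(Sstar))²`. The binary Pinsker inequality holds because
`a ↦ KL(a ∥ b) - 2 (a - b)²` is convex on `[0, 1]` (its second derivative is `1/(a(1-a)) - 4`)
and has a critical point at `a = b`, where it vanishes.
-/

open Finset

/-- Product-Bernoulli mass function on configurations `S ⊆ {0,…,p-1}`. -/
noncomputable def bernoulliMass {p : ℕ} (φ : Fin p → ℝ) (S : Finset (Fin p)) : ℝ :=
  (∏ j ∈ S, φ j) * ∏ j ∈ Sᶜ, (1 - φ j)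

/-- Kullback–Leibler divergence, with the convention `0 · log 0 = 0`. -/
noncomputable def klDiv {p : ℕ} (q π : Finset (Fin p) → ℝ) : ℝ :=
  ∑ S : Finset (Fin p), q S * Real.log (q S / π S)

section

-- kept local: with `Real` open, the `π` of `stmt_2` would parse as `Real.pi`
open Real

lemma mul_log_div_eq {b : ℝ} (hb : b ≠ 0) (x : ℝ) : x * log (x / b) = x * log x - x * log b := by
  rcases eq_or_ne x 0 with rfl | hx
  · simp
  · rw [log_div hx hb, mul_sub]

theorem binary_pinsker {a b : ℝ} (ha : a ∈ Set.Icc (0 : ℝ) 1)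
    (hb : b ∈ Set.Ioo (0 : ℝ) 1) :
    2 * (a - b) ^ 2 ≤ a * log (a / b) + (1 - a) * log ((1 - a) / (1 - b)) := by
  obtain ⟨hb0, hb1⟩ := hb
  set f : ℝ → ℝ := fun x => x * log x - x * log b + (1 - x) * log (1 - x)
    - (1 - x) * log (1 - b) - 2 * (x - b) ^ 2 with hf
  set f' : ℝ → ℝ := fun x => log x - log (1 - x) - log b + log (1 - b) - 4 * (x - b) with hf'
  have hderiv : ∀ x ∈ Set.Ioo (0 : ℝ) 1, HasDerivAt f (f' x) x := by
    intro x ⟨hx0, hx1⟩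
    have h1x : HasDerivAt (fun y : ℝ => 1 - y) (-1) x := (hasDerivAt_id' x).const_sub 1
    have := (((((hasDerivAt_mul_log hx0.ne').sub ((hasDerivAt_id' x).mul_const (log b))).add
      ((hasDerivAt_mul_log (sub_ne_zero.2 hx1.ne')).comp x h1x)).sub
      (h1x.mul_const (log (1 - b)))).sub (((hasDerivAt_id' x).sub_const b).pow 2 |>.const_mul 2))
    exact this.congr_deriv (by simp only [hf']; ring)
  have hderiv2 : ∀ x ∈ Set.Ioo (0 : ℝ) 1, HasDerivAt f' (x⁻¹ + (1 - x)⁻¹ - 4) x := by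
    intro x ⟨hx0, hx1⟩
    have h1x : HasDerivAt (fun y : ℝ => 1 - y) (-1) x := (hasDerivAt_id' x).const_sub 1
    have := (((((hasDerivAt_log hx0.ne').sub ((hasDerivAt_log (sub_ne_zero.2 hx1.ne')).comp x
      h1x)).sub_const (log b)).add_const (log (1 - b))).sub
      (((hasDerivAt_id' x).sub_const b).const_mul 4))
    exact this.congr_deriv (by ring)
  have hconvex : ConvexOn ℝ (Set.Icc 0 1) f := by
    refine convexOn_of_hasDerivWithinAt2_nonneg (f' := f') (f'' := fun x => x⁻¹ + (1 - x)⁻¹ - 4)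
      (convex_Icc 0 1) ?_ ?_ ?_ ?_
    · have : Continuous fun x : ℝ => (1 - x) * log (1 - x) :=
        continuous_mul_log.comp (continuous_const.sub continuous_id)
      exact (by fun_prop : Continuous f).continuousOn
    all_goals rw [interior_Icc]
    · exact fun x hx => (hderiv x hx).hasDerivWithinAt
    · exact fun x hx => (hderiv2 x hx).hasDerivWithinAt
    · intro x ⟨hx0, hx1⟩
      have hx1' : 0 < 1 - x := sub_pos.2 hx1
      -- `x (1 - x) ≤ 1/4`
      rw [inv_add_inv hx0.ne' hx1'.ne', sub_nonneg, le_div_iff₀ (by positivity)]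
      nlinarith [sq_nonneg (2 * x - 1)]
  have hmin : IsMinOn f (Set.Icc 0 1) b := by
    refine hconvex.isMinOn_of_rightDeriv_eq_zero (by simpa using And.intro hb0 hb1) ?_
    rw [(hderiv b ⟨hb0, hb1⟩).hasDerivWithinAt.derivWithin (uniqueDiffWithinAt_Ioi b)]
    simp [hf']
  have hfa : f b ≤ f a := hmin ha
  simp only [hf] at hfa
  rw [mul_log_div_eq hb0.ne', mul_log_div_eq (sub_pos.2 hb1).ne']
  linarith

theorem sum_mul_log_div_sum_le {ι : Type*} (t : Finset ι) {q w : ι → ℝ}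
    (hq : ∀ i ∈ t, 0 ≤ q i) (hw : ∀ i ∈ t, 0 < w i) :
    (∑ i ∈ t, q i) * log ((∑ i ∈ t, q i) / ∑ i ∈ t, w i) ≤ ∑ i ∈ t, q i * log (q i / w i) := by
  rcases t.eq_empty_or_nonempty with rfl | ht
  · simp
  have hW : 0 < ∑ i ∈ t, w i := sum_pos hw ht
  -- Jensen for the convex function `x ↦ x log x` at the points `q i / w i` with weights `w i`
  have hjensen := convexOn_mul_log.map_centerMass_le (fun i hi => (hw i hi).le) hW
    (fun i hi => div_nonneg (hq i hi) (hw i hi).le)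
  have hmean : ∑ i ∈ t, w i * (q i / w i) = ∑ i ∈ t, q i :=
    sum_congr rfl fun i hi => mul_div_cancel₀ _ (hw i hi).ne'
  have hvalues : ∑ i ∈ t, w i * (q i / w i * log (q i / w i)) = ∑ i ∈ t, q i * log (q i / w i) :=
    sum_congr rfl fun i hi => by rw [← mul_assoc, mul_div_cancel₀ _ (hw i hi).ne']
  simp only [centerMass, smul_eq_mul, Function.comp_apply] at hjensen
  rw [hmean, hvalues, inv_mul_eq_div] at hjensen
  calc (∑ i ∈ t, q i) * log ((∑ i ∈ t, q i) / ∑ i ∈ t, w i)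
      = (∑ i ∈ t, w i) * ((∑ i ∈ t, q i) / (∑ i ∈ t, w i) *
          log ((∑ i ∈ t, q i) / ∑ i ∈ t, w i)) := by field_simp
    _ ≤ (∑ i ∈ t, w i) * ((∑ i ∈ t, w i)⁻¹ * ∑ i ∈ t, q i * log (q i / w i)) :=
      mul_le_mul_of_nonneg_left hjensen hW.le
    _ = ∑ i ∈ t, q i * log (q i / w i) := by field_simp

theorem two_mul_sq_sub_le_sum_mul_log_div {α : Type*} [Fintype α] [DecidableEq α] {q r : α → ℝ}
    (hq : ∀ x, 0 ≤ q x) (hq1 : ∑ x, q x = 1) (hr : ∀ x, 0 < r x) (hr1 : ∑ x, r x = 1) (s : α) :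
    2 * (q s - r s) ^ 2 ≤ ∑ x, q x * log (q x / r x) := by
  have hq_rest : ∑ x ∈ univ.erase s, q x = 1 - q s := by
    rw [← hq1, ← add_sum_erase univ q (mem_univ s), add_sub_cancel_left]
  have hr_rest : ∑ x ∈ univ.erase s, r x = 1 - r s := by
    rw [← hr1, ← add_sum_erase univ r (mem_univ s), add_sub_cancel_left]
  have hsplit := (add_sum_erase univ (fun x => q x * log (q x / r x)) (mem_univ s)).symm
  have hlogsum := sum_mul_log_div_sum_le (univ.erase s) (fun x _ => hq x) (fun x _ => hr x)
  rw [hq_rest, hr_rest] at hlogsum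
  rcases (single_le_sum (fun x _ => (hr x).le) (mem_univ s)).trans_eq hr1 |>.lt_or_eq
    with hrs | hrs
  · have hqs : q s ≤ 1 := (single_le_sum (fun x _ => hq x) (mem_univ s)).trans_eq hq1
    have := binary_pinsker ⟨hq s, hqs⟩ ⟨hr s, hrs⟩
    linarith
  · -- `r` is a point mass, so `s` is the only point and `q s = 1` too
    have hrest : univ.erase s = ∅ := by
      by_contra h
      have := sum_pos (fun x _ => hr x) (nonempty_iff_ne_empty.2 h)
      linarith
    rw [hrest, sum_empty, eq_comm, sub_eq_zero] at hq_rest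
    simp [hsplit, hrest, hrs, ← hq_rest]

end

section

variable {p : ℕ}

lemma bernoulliMass_nonneg {φ : Fin p → ℝ} (hφ : ∀ j, φ j ∈ Set.Icc (0 : ℝ) 1)
    (S : Finset (Fin p)) : 0 ≤ bernoulliMass φ S :=
  mul_nonneg (prod_nonneg fun j _ => (hφ j).1) (prod_nonneg fun j _ => sub_nonneg.2 (hφ j).2)

lemma sum_bernoulliMass (φ : Fin p → ℝ) : ∑ S, bernoulliMass φ S = 1 := by
  simpa [bernoulliMass] using (Fintype.prod_add φ (fun j => 1 - φ j)).symm

lemma bernoulliMass_indicator (T S : Finset (Fin p)) :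
    bernoulliMass (fun j => if j ∈ T then 1 else 0) S = if S = T then 1 else 0 := by
  have hcompl : ∀ j, (1 : ℝ) - (if j ∈ T then 1 else 0) = if j ∉ T then 1 else 0 := fun j => by
    split_ifs <;> simp_all
  simp only [bernoulliMass, hcompl, prod_boole, ite_zero_mul_ite_zero, mul_one]
  refine if_congr ?_ rfl rfl
  simp only [mem_compl, not_imp_not, ← subset_iff, subset_antisymm_iff]

lemma klDiv_bernoulliMass_indicator (π : Finset (Fin p) → ℝ) (T : Finset (Fin p)) :
    klDiv (bernoulliMass fun j => if j ∈ T then 1 else 0) π = -Real.log (π T) := by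
  simp [klDiv, bernoulliMass_indicator]

end

theorem stmt_2 (p : ℕ) (Sstar : Finset (Fin p)) (π : Finset (Fin p) → ℝ)
    (hπsum : ∑ S : Finset (Fin p), π S = 1) (hπpos : ∀ S, 0 < π S)
    (ε : ℝ) (hε : ε ∈ Set.Ioo (0 : ℝ) 1) (hπstar : 1 - ε ≤ π Sstar)
    (φhat : Fin p → ℝ) (hφhat : ∀ j, φhat j ∈ Set.Icc (0 : ℝ) 1)
    (hmin : ∀ φ : Fin p → ℝ, (∀ j, φ j ∈ Set.Icc (0 : ℝ) 1) →
      klDiv (bernoulliMass φhat) π ≤ klDiv (bernoulliMass φ) π) :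
    1 - ε - Real.sqrt ((- Real.log (1 - ε)) / 2) ≤ bernoulliMass φhat Sstar := by
  set q := bernoulliMass φhat
  have hKL : klDiv q π ≤ -Real.log (1 - ε) := calc
    klDiv q π ≤ klDiv (bernoulliMass fun j => if j ∈ Sstar then 1 else 0) π :=
      hmin _ fun j => by split_ifs <;> simp
    _ = -Real.log (π Sstar) := klDiv_bernoulliMass_indicator π Sstar
    _ ≤ -Real.log (1 - ε) := neg_le_neg (Real.log_le_log (sub_pos.2 hε.2) hπstar)
  have hpinsker : 2 * (q Sstar - π Sstar) ^ 2 ≤ klDiv q π :=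
    two_mul_sq_sub_le_sum_mul_log_div (bernoulliMass_nonneg hφhat) (sum_bernoulliMass φhat)
      hπpos hπsum Sstar
  have hgap : π Sstar - q Sstar ≤ Real.sqrt (-Real.log (1 - ε) / 2) :=
    Real.le_sqrt_of_sq_le (by nlinarith)
  linarith
end

section
/- (Selection consistency of the variational approximation, deterministic form of Theorem 1.) For each n ∈ ℕ let p_n ∈ ℕ, let S*_n be a configuration of {0,...,p_n−1}, let π_n be a probability mass function on the 2^{p_n} configurations with π_n(S) > 0 for all S, and let φ̂_n ∈ [0,1]^{p_n} be a minimizer of φ ↦ KL(q_φ ∥ π_n) over [0,1]^{p_n}. If π_n(S*_n) → 1 as n → ∞, then q_{φ̂_n}(S*_n) → 1 as n → ∞. -/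
open Finset Filter

open Finset

lemma mass_sum_one {p : ℕ} (φ : Fin p → ℝ) :
    ∑ S : Finset (Fin p), bernoulliMass φ S = 1 := by
  have h := Finset.prod_add φ (fun j => 1 - φ j) (univ : Finset (Fin p))
  simp only [add_sub_cancel, Finset.prod_const_one, powerset_univ] at h
  rw [eq_comm] at h
  rw [← h]
  apply Finset.sum_congr rfl
  intro S _
  rw [bernoulliMass, Finset.compl_eq_univ_sdiff]

lemma key_pt (x y c : ℝ) (hx : 0 ≤ x) (hy : 0 < y) (hc : 0 < c) :
    x * Real.log c + x - c * y ≤ x * Real.log (x / y) := by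
  rcases eq_or_lt_of_le hx with h | hx'
  · simp [← h]
    positivity
  · have h1 : Real.log (c * y / x) ≤ c * y / x - 1 := Real.log_le_sub_one_of_pos (by positivity)
    have h2 : Real.log (c * y / x) = Real.log c + Real.log y - Real.log x := by
      rw [Real.log_div (by positivity) (ne_of_gt hx'), Real.log_mul (ne_of_gt hc) (ne_of_gt hy)]
    have h3 : Real.log (x / y) = Real.log x - Real.log y :=
      Real.log_div (ne_of_gt hx') (ne_of_gt hy)
    rw [h3]
    have := mul_le_mul_of_nonneg_left h1 hx
    rw [h2, mul_div_assoc] at this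
    have hxy : x * (c * (y / x)) = c * y := by field_simp
    nlinarith

lemma mass_indicator {p : ℕ} (T S : Finset (Fin p)) :
    bernoulliMass (fun j => if j ∈ T then (1:ℝ) else 0) S = if S = T then 1 else 0 := by
  rw [bernoulliMass]
  by_cases h : S = T
  · subst h
    rw [if_pos rfl]
    rw [Finset.prod_congr rfl (fun j hj => if_pos hj), Finset.prod_const_one]
    rw [Finset.prod_congr rfl (fun j hj => by
      rw [if_neg (Finset.mem_compl.mp hj)]), ]
    simp
  · rw [if_neg h]
    by_cases hsub : S ⊆ T
    · have : ∃ j ∈ T, j ∉ S := by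
        by_contra hc
        push_neg at hc
        exact h (Finset.Subset.antisymm hsub hc)
      obtain ⟨j, hjT, hjS⟩ := this
      have : ∏ j ∈ Sᶜ, (1 - if j ∈ T then (1:ℝ) else 0) = 0 :=
        Finset.prod_eq_zero (Finset.mem_compl.mpr hjS) (by rw [if_pos hjT]; ring)
      rw [this, mul_zero]
    · obtain ⟨j, hjS, hjT⟩ := Finset.not_subset.mp hsub
      have : ∏ j ∈ S, (if j ∈ T then (1:ℝ) else 0) = 0 :=
        Finset.prod_eq_zero hjS (if_neg hjT)
      rw [this, zero_mul]

lemma kl_indicator {p : ℕ} (T : Finset (Fin p)) (π : Finset (Fin p) → ℝ) :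
    klDiv (bernoulliMass (fun j => if j ∈ T then (1:ℝ) else 0)) π = - Real.log (π T) := by
  rw [klDiv]
  rw [Finset.sum_eq_single T]
  · rw [mass_indicator, if_pos rfl, one_mul, one_div, Real.log_inv]
  · intro S _ hS
    rw [mass_indicator, if_neg hS, zero_mul]
  · intro h
    exact absurd (Finset.mem_univ T) h

lemma mass_nonneg {p : ℕ} (φ : Fin p → ℝ) (hφ : ∀ j, φ j ∈ Set.Icc (0:ℝ) 1) (S : Finset (Fin p)) :
    0 ≤ bernoulliMass φ S :=
  mul_nonneg (Finset.prod_nonneg fun j _ => (hφ j).1)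
    (Finset.prod_nonneg fun j _ => by linarith [(hφ j).2])

lemma mass_le_one {p : ℕ} (φ : Fin p → ℝ) (hφ : ∀ j, φ j ∈ Set.Icc (0:ℝ) 1) (S : Finset (Fin p)) :
    bernoulliMass φ S ≤ 1 := by
  have h1 : ∏ j ∈ S, φ j ≤ 1 := Finset.prod_le_one (fun j _ => (hφ j).1) (fun j _ => (hφ j).2)
  have h2 : ∏ j ∈ Sᶜ, (1 - φ j) ≤ 1 :=
    Finset.prod_le_one (fun j _ => by linarith [(hφ j).2]) (fun j _ => by linarith [(hφ j).1])
  have h3 : (0:ℝ) ≤ ∏ j ∈ S, φ j := Finset.prod_nonneg fun j _ => (hφ j).1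
  calc bernoulliMass φ S ≤ (∏ j ∈ S, φ j) * 1 := by
        exact mul_le_mul_of_nonneg_left h2 h3
    _ ≤ 1 := by rw [mul_one]; exact h1

lemma kl_lower {p : ℕ} (φ : Fin p → ℝ) (hφ : ∀ j, φ j ∈ Set.Icc (0:ℝ) 1)
    (π : Finset (Fin p) → ℝ) (hπpos : ∀ S, 0 < π S) (T : Finset (Fin p))
    (hPi : 0 < ∑ S ∈ univ.erase T, π S) :
    bernoulliMass φ T - π T +
      ((∑ S ∈ univ.erase T, bernoulliMass φ S) * (-Real.log (∑ S ∈ univ.erase T, π S)) +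
        (∑ S ∈ univ.erase T, bernoulliMass φ S) - 1)
      ≤ klDiv (bernoulliMass φ) π := by
  set q := bernoulliMass φ with hq
  set Pi := ∑ S ∈ univ.erase T, π S with hPidef
  set Q := ∑ S ∈ univ.erase T, q S with hQdef
  have hsplit : klDiv q π
      = q T * Real.log (q T / π T) + ∑ S ∈ univ.erase T, q S * Real.log (q S / π S) :=
    (Finset.add_sum_erase univ (fun S => q S * Real.log (q S / π S)) (Finset.mem_univ T)).symm
  have hb1 : q T * Real.log 1 + q T - 1 * π T ≤ q T * Real.log (q T / π T) :=
    key_pt _ _ _ (mass_nonneg φ hφ T) (hπpos T) one_pos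
  have hb2 : ∑ S ∈ univ.erase T, (q S * Real.log (1/Pi) + q S - (1/Pi) * π S)
      ≤ ∑ S ∈ univ.erase T, q S * Real.log (q S / π S) :=
    Finset.sum_le_sum fun S _ =>
      key_pt _ _ _ (mass_nonneg φ hφ S) (hπpos S) (by positivity)
  have hcalc : ∑ S ∈ univ.erase T, (q S * Real.log (1/Pi) + q S - (1/Pi) * π S)
      = Q * Real.log (1/Pi) + Q - (1/Pi) * Pi := by
    rw [Finset.sum_sub_distrib, Finset.sum_add_distrib, ← Finset.sum_mul, ← Finset.mul_sum]
  have hinv : (1/Pi) * Pi = 1 := by field_simp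
  have hlog : Real.log (1/Pi) = -Real.log Pi := by rw [one_div, Real.log_inv]
  rw [hcalc, hinv, hlog] at hb2
  rw [hsplit]
  rw [Real.log_one, mul_zero, zero_add, one_mul] at hb1
  linarith [hb1, hb2]

theorem stmt_3 (p : ℕ → ℕ) (Sstar : ∀ n : ℕ, Finset (Fin (p n)))
    (π : ∀ n : ℕ, Finset (Fin (p n)) → ℝ)
    (hπsum : ∀ n, ∑ S : Finset (Fin (p n)), π n S = 1)
    (hπpos : ∀ n S, 0 < π n S)
    (φhat : ∀ n : ℕ, Fin (p n) → ℝ)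
    (hφhat : ∀ n j, φhat n j ∈ Set.Icc (0 : ℝ) 1)
    (hmin : ∀ n (φ : Fin (p n) → ℝ), (∀ j, φ j ∈ Set.Icc (0 : ℝ) 1) →
      klDiv (bernoulliMass (φhat n)) (π n) ≤ klDiv (bernoulliMass φ) (π n))
    (hconv : Tendsto (fun n => π n (Sstar n)) atTop (nhds 1)) :
    Tendsto (fun n => bernoulliMass (φhat n) (Sstar n)) atTop (nhds 1) := by
  rw [Metric.tendsto_atTop]
  intro ε hε
  set M : ℝ := (1 + Real.log 2) / ε + 1 with hMdef
  have hlog2 : 0 < Real.log 2 := Real.log_pos (by norm_num)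
  have hM : 0 < M := by positivity
  have hεne : ε ≠ 0 := ne_of_gt hε
  have hεM : ε * M = 1 + Real.log 2 + ε := by
    rw [hMdef]
    field_simp
  set δ : ℝ := min (Real.exp (-M)) (1/2) with hδdef
  have hδpos : 0 < δ := lt_min (Real.exp_pos _) (by norm_num)
  have hδhalf : δ ≤ 1/2 := min_le_right _ _
  have hδexp : δ ≤ Real.exp (-M) := min_le_left _ _
  have hev : ∀ᶠ n in atTop, 1 - δ < π n (Sstar n) :=
    hconv.eventually (eventually_gt_nhds (by linarith))
  rw [eventually_atTop] at hev
  obtain ⟨N, hN⟩ := hev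
  refine ⟨N, fun n hn => ?_⟩
  have hb : 1 - δ < π n (Sstar n) := hN n hn
  set q : Finset (Fin (p n)) → ℝ := bernoulliMass (φhat n) with hqdef
  set a : ℝ := q (Sstar n) with hadef
  set Q : ℝ := ∑ S ∈ univ.erase (Sstar n), q S with hQdef
  set Pi : ℝ := ∑ S ∈ univ.erase (Sstar n), π n S with hPidef
  have hbPi : π n (Sstar n) + Pi = 1 := by
    rw [hPidef]
    rw [Finset.add_sum_erase univ (π n) (Finset.mem_univ _)]
    exact hπsum n
  have haQ : a + Q = 1 := by
    rw [hadef, hQdef]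
    rw [Finset.add_sum_erase univ q (Finset.mem_univ _)]
    exact mass_sum_one (φhat n)
  have ha0 : 0 ≤ a := mass_nonneg _ (hφhat n) _
  have hQ0 : (0:ℝ) ≤ Q :=
    Finset.sum_nonneg fun S _ => mass_nonneg _ (hφhat n) S
  have hgoal : Q < ε → dist (bernoulliMass (φhat n) (Sstar n)) 1 < ε := by
    intro h
    rw [Real.dist_eq, abs_lt]
    constructor <;> linarith
  apply hgoal
  by_cases hA : (univ.erase (Sstar n)).Nonempty
  · have hPipos : 0 < Pi := Finset.sum_pos (fun S _ => hπpos n S) hA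
    -- upper bound on KL
    have hind : ∀ j, (if j ∈ Sstar n then (1:ℝ) else 0) ∈ Set.Icc (0:ℝ) 1 := by
      intro j; by_cases h : j ∈ Sstar n <;> simp [h]
    have hupper : klDiv q (π n) ≤ - Real.log (π n (Sstar n)) := by
      rw [← kl_indicator (Sstar n) (π n)]
      exact hmin n _ hind
    -- lower bound on KL
    have hlower := kl_lower (φhat n) (hφhat n) (π n) (hπpos n) (Sstar n) hPipos
    rw [← hqdef, ← hadef, ← hQdef, ← hPidef] at hlower
    -- b > 1/2 so -log b < log 2
    have hbhalf : 1/2 < π n (Sstar n) := by linarith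
    have hlogb : -Real.log (π n (Sstar n)) < Real.log 2 := by
      have := Real.log_lt_log (by norm_num : (0:ℝ) < 1/2) hbhalf
      rw [one_div, Real.log_inv] at this
      linarith
    -- Pi < δ ≤ exp(-M) so -log Pi > M
    have hPiδ : Pi < δ := by linarith
    have hlogPi : M < -Real.log Pi := by
      have := Real.log_lt_log hPipos (lt_of_lt_of_le hPiδ hδexp)
      rw [Real.log_exp] at this
      linarith
    have hb1 : π n (Sstar n) ≤ 1 := by linarith [hPipos]
    -- combine
    have hQL : Q * (-Real.log Pi) ≤ 1 + Real.log 2 := by nlinarith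
    have hQM : Q * M ≤ Q * (-Real.log Pi) :=
      mul_le_mul_of_nonneg_left (le_of_lt hlogPi) hQ0
    nlinarith
  · rw [Finset.not_nonempty_iff_eq_empty] at hA
    have : Q = 0 := by rw [hQdef, hA, Finset.sum_empty]
    linarith
end

section
/- (Jaakkola–Jordan quadratic bound, per-observation form.) For every x ∈ ℝ, every η ∈ ℝ with η ≠ 0, and every y ∈ {0,1}: y·x − log(1 + exp(x)) ≥ log( exp(η)/(1 + exp(η)) ) − η/2 + (y − 1/2)·x − ( tanh(η/2)/(4η) ) · (x² − η²). -/
/-!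
Cancelling `y * x` and writing `log (1 + exp z) - z / 2 = log 2 + log (cosh (z / 2))`, the bound
says that the even function `s ↦ log (cosh s) - tanh t / (2 * t) * s ^ 2` is maximal at `s = t`
(with `t = η / 2`, which may be taken positive). For `s ≥ 0` its derivative `tanh s - (tanh t / t) * s`
changes sign at `t` because `tanh s / s` decreases on `(0, ∞)`, which is the chord inequality for
the concave function `tanh` on `[0, ∞)`.
-/

open Real Set

theorem ConcaveOn.smul_le_map_smul {𝕜 E β : Type*} [Semiring 𝕜] [PartialOrder 𝕜]
    [AddCommMonoid E] [AddCommMonoid β] [PartialOrder β] [IsOrderedAddMonoid β]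
    [Module 𝕜 E] [Module 𝕜 β] [PosSMulMono 𝕜 β] {s : Set E} {f : E → β}
    (hf : ConcaveOn 𝕜 s f) (h0 : (0 : E) ∈ s) (hf0 : 0 ≤ f 0) {x : E} (hx : x ∈ s)
    {a b : 𝕜} (ha : 0 ≤ a) (hb : 0 ≤ b) (hab : a + b = 1) :
    a • f x ≤ f (a • x) := by
  calc a • f x ≤ a • f x + b • f 0 := le_add_of_nonneg_right (smul_nonneg hb hf0)
    _ ≤ f (a • x + b • (0 : E)) := hf.2 hx h0 ha hb hab
    _ = f (a • x) := by rw [smul_zero, add_zero]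

namespace Real

theorem hasDerivAt_tanh (x : ℝ) : HasDerivAt tanh (1 / cosh x ^ 2) x := by
  have h := (hasDerivAt_sinh x).div (hasDerivAt_cosh x) (cosh_pos x).ne'
  rw [← sq, ← sq, cosh_sq_sub_sinh_sq] at h
  exact (funext tanh_eq_sinh_div_cosh : tanh = _) ▸ h

theorem continuous_tanh : Continuous tanh :=
  continuous_iff_continuousAt.2 fun x => (hasDerivAt_tanh x).continuousAt

theorem concaveOn_tanh_Ici : ConcaveOn ℝ (Ici 0) tanh := by
  refine AntitoneOn.concaveOn_of_deriv (convex_Ici 0) continuous_tanh.continuousOn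
    (fun x _ => (hasDerivAt_tanh x).differentiableAt.differentiableWithinAt) ?_
  intro a ha b hb hab
  rw [interior_Ici] at ha hb
  rw [(hasDerivAt_tanh a).deriv, (hasDerivAt_tanh b).deriv]
  gcongr
  exact cosh_le_cosh.2 (by rwa [abs_of_pos ha, abs_of_pos hb])

theorem mul_tanh_le_mul_tanh {s t : ℝ} (hs : 0 ≤ s) (hst : s ≤ t) :
    s * tanh t ≤ t * tanh s := by
  rcases hst.eq_or_lt with rfl | hst
  · rfl
  have ht : 0 < t := hs.trans_lt hst
  have h := concaveOn_tanh_Ici.smul_le_map_smul (by simp) (by simp) (mem_Ici.2 ht.le)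
    (div_nonneg hs ht.le) (sub_nonneg.2 ((div_le_one ht).2 hst.le)) (add_sub_cancel _ _)
  rw [smul_eq_mul, smul_eq_mul, div_mul_cancel₀ _ ht.ne', div_mul_eq_mul_div, div_le_iff₀ ht] at h
  linarith

theorem hasDerivAt_log_cosh (x : ℝ) : HasDerivAt (fun y => log (cosh y)) (tanh x) x := by
  have h := (hasDerivAt_cosh x).log (cosh_pos x).ne'
  rwa [← tanh_eq_sinh_div_cosh] at h

theorem log_cosh_sub_log_cosh_le_of_pos {s t : ℝ} (hs : 0 ≤ s) (ht : 0 < t) :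
    log (cosh s) - log (cosh t) ≤ tanh t / (2 * t) * (s ^ 2 - t ^ 2) := by
  set c := tanh t / t
  set h : ℝ → ℝ := fun u => log (cosh u) - c / 2 * u ^ 2
  have hh (u : ℝ) : HasDerivAt h (tanh u - c * u) u := by
    refine ((hasDerivAt_log_cosh u).sub ((hasDerivAt_pow 2 u).const_mul (c / 2))).congr_deriv ?_
    push_cast
    ring
  have hcont : Continuous h := continuous_iff_continuousAt.2 fun u => (hh u).continuousAt
  have hdiff : Differentiable ℝ h := fun u => (hh u).differentiableAt
  suffices h s ≤ h t by
    simp only [h, c] at this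
    rw [show tanh t / (2 * t) = tanh t / t / 2 by ring]
    linarith
  rcases le_total s t with hst | hts
  · refine monotoneOn_of_deriv_nonneg (convex_Icc 0 t) hcont.continuousOn
      hdiff.differentiableOn (fun u hu => ?_) ⟨hs, hst⟩ ⟨ht.le, le_rfl⟩ hst
    rw [interior_Icc] at hu
    rw [(hh u).deriv, sub_nonneg, div_mul_eq_mul_div, div_le_iff₀ ht]
    linarith [mul_tanh_le_mul_tanh hu.1.le hu.2.le]
  · refine antitoneOn_of_deriv_nonpos (convex_Ici t) hcont.continuousOn
      hdiff.differentiableOn (fun u hu => ?_) self_mem_Ici hts hts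
    rw [interior_Ici] at hu
    rw [(hh u).deriv, sub_nonpos, div_mul_eq_mul_div, le_div_iff₀ ht]
    linarith [mul_tanh_le_mul_tanh ht.le hu.le]

theorem log_cosh_sub_log_cosh_le (s : ℝ) {t : ℝ} (ht : t ≠ 0) :
    log (cosh s) - log (cosh t) ≤ tanh t / (2 * t) * (s ^ 2 - t ^ 2) := by
  have key := log_cosh_sub_log_cosh_le_of_pos (abs_nonneg s) (abs_pos.2 ht)
  have hodd : tanh |t| / (2 * |t|) = tanh t / (2 * t) := by
    rcases abs_cases t with ⟨h, _⟩ | ⟨h, _⟩ <;> rw [h]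
    rw [tanh_neg, mul_neg, neg_div_neg_eq]
  rwa [cosh_abs, cosh_abs, hodd, sq_abs, sq_abs] at key

theorem log_one_add_exp_sub_half (z : ℝ) :
    log (1 + exp z) - z / 2 = log 2 + log (cosh (z / 2)) := by
  have h : 1 + exp z = exp (z / 2) * (2 * cosh (z / 2)) := by
    rw [cosh_eq, mul_div_cancel₀ _ two_ne_zero, mul_add, ← exp_add, ← exp_add, add_halves,
      add_neg_cancel, exp_zero, add_comm]
  rw [h, log_mul (exp_pos _).ne' (by positivity), log_exp,
    log_mul two_ne_zero (cosh_pos _).ne']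
  ring

end Real

theorem stmt_9_general (x η y : ℝ) (hη : η ≠ 0) :
    y * x - Real.log (1 + Real.exp x)
      ≥ Real.log (Real.exp η / (1 + Real.exp η)) - η / 2 + (y - 1 / 2) * x
        - (Real.tanh (η / 2) / (4 * η)) * (x ^ 2 - η ^ 2) := by
  have hbound := log_cosh_sub_log_cosh_le (x / 2) (div_ne_zero hη two_ne_zero)
  have hx := log_one_add_exp_sub_half x
  have hη' := log_one_add_exp_sub_half η
  rw [log_div (exp_pos η).ne' (by positivity), log_exp]
  have hcoeff : tanh (η / 2) / (2 * (η / 2)) * ((x / 2) ^ 2 - (η / 2) ^ 2)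
      = tanh (η / 2) / (4 * η) * (x ^ 2 - η ^ 2) := by ring
  linarith

theorem stmt_9 (x η y : ℝ) (hη : η ≠ 0) (hy : y = 0 ∨ y = 1) :
    y * x - Real.log (1 + Real.exp x)
      ≥ Real.log (Real.exp η / (1 + Real.exp η)) - η / 2 + (y - 1 / 2) * x
        - (Real.tanh (η / 2) / (4 * η)) * (x ^ 2 - η ^ 2) :=
  stmt_9_general x η y hη
end

section
/- Let p ≥ 1 be a natural number, a > 0, and φ ∈ [0,1]^p. Define the (unnormalized) complexity prior on configurations by log π_p(S) = −log C(p, |S|) − a·|S|·log p, where C(p, s) is the binomial coefficient. Then Σ_S q_φ(S) · log π_p(S) ≥ − Σ_{j=0}^{p−1} φ_j · ( 1 + log p + a·log p ), where the sum on the left ranges over all 2^p configurations S. (The proof uses the bound log C(p, s) ≤ s·(1 + log p) for 0 ≤ s ≤ p.) -/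
open Finset

lemma mass_sum_one_s11 {ι : Type*} [DecidableEq ι] (s : Finset ι) (φ : ι → ℝ) :
    ∑ t ∈ s.powerset, (∏ j ∈ t, φ j) * ∏ j ∈ s \ t, (1 - φ j) = 1 := by
  rw [← Finset.prod_add]
  simp

lemma mass_sum_card {ι : Type*} [DecidableEq ι] (s : Finset ι) (φ : ι → ℝ) :
    ∑ t ∈ s.powerset, ((∏ j ∈ t, φ j) * ∏ j ∈ s \ t, (1 - φ j)) * t.card
      = ∑ j ∈ s, φ j := by
  classical
  induction s using Finset.induction with
  | empty => simp
  | @insert a s ha ih =>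
    rw [Finset.sum_powerset_insert ha]
    have h1 : ∀ t ∈ s.powerset,
        ((∏ j ∈ t, φ j) * ∏ j ∈ insert a s \ t, (1 - φ j)) * t.card
          = (1 - φ a) * (((∏ j ∈ t, φ j) * ∏ j ∈ s \ t, (1 - φ j)) * t.card) := by
      intro t ht
      rw [Finset.mem_powerset] at ht
      have hat : a ∉ t := fun h => ha (ht h)
      have : insert a s \ t = insert a (s \ t) := by
        rw [Finset.insert_sdiff_of_notMem _ hat]
      rw [this, Finset.prod_insert (by simp [ha])]
      ring
    have h2 : ∀ t ∈ s.powerset,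
        ((∏ j ∈ insert a t, φ j) * ∏ j ∈ insert a s \ insert a t, (1 - φ j))
            * (insert a t).card
          = φ a * (((∏ j ∈ t, φ j) * ∏ j ∈ s \ t, (1 - φ j)) * (t.card + 1)) := by
      intro t ht
      rw [Finset.mem_powerset] at ht
      have hat : a ∉ t := fun h => ha (ht h)
      have hc : insert a s \ insert a t = s \ t := by
        ext x; simp only [Finset.mem_sdiff, Finset.mem_insert]
        constructor
        · rintro ⟨hx | hx, hx2⟩
          · exact absurd (Or.inl hx) hx2
          · exact ⟨hx, fun h => hx2 (Or.inr h)⟩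
        · rintro ⟨hx, hx2⟩
          exact ⟨Or.inr hx, by rintro (rfl | h); exact ha hx; exact hx2 h⟩
      rw [hc, Finset.prod_insert hat, Finset.card_insert_of_notMem hat]
      push_cast
      ring
    rw [Finset.sum_congr rfl h1, Finset.sum_congr rfl h2, ← Finset.mul_sum,
      ← Finset.mul_sum]
    have hexp : ∑ t ∈ s.powerset,
        ((∏ j ∈ t, φ j) * ∏ j ∈ s \ t, (1 - φ j)) * ((t.card : ℝ) + 1)
        = (∑ j ∈ s, φ j) + 1 := by
      have : ∀ t ∈ s.powerset,
          ((∏ j ∈ t, φ j) * ∏ j ∈ s \ t, (1 - φ j)) * ((t.card : ℝ) + 1)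
          = ((∏ j ∈ t, φ j) * ∏ j ∈ s \ t, (1 - φ j)) * (t.card : ℝ)
            + (∏ j ∈ t, φ j) * ∏ j ∈ s \ t, (1 - φ j) := by
        intro t _; ring
      rw [Finset.sum_congr rfl this, Finset.sum_add_distrib, ih, mass_sum_one_s11]
    rw [ih, hexp, Finset.sum_insert ha]
    ring

theorem stmt_11 (p : ℕ) (hp : 1 ≤ p) (a : ℝ) (ha : 0 < a)
    (φ : Fin p → ℝ) (hφ : ∀ j, φ j ∈ Set.Icc (0 : ℝ) 1)
    (logπ : Finset (Fin p) → ℝ)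
    (hlogπ : ∀ S : Finset (Fin p),
      logπ S = - Real.log (Nat.choose p S.card) - a * S.card * Real.log p) :
    ∑ S : Finset (Fin p), bernoulliMass φ S * logπ S
      ≥ - ∑ j : Fin p, φ j * (1 + Real.log p + a * Real.log p) := by
  classical
  set c : ℝ := 1 + Real.log p + a * Real.log p with hc
  have hlogp : 0 ≤ Real.log p := Real.log_nonneg (by exact_mod_cast hp)
  have hcpos : 0 ≤ c := by positivity
  -- mass nonneg
  have hmass : ∀ S : Finset (Fin p), 0 ≤ bernoulliMass φ S := by
    intro S
    apply mul_nonneg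
    · exact Finset.prod_nonneg fun j _ => (hφ j).1
    · exact Finset.prod_nonneg fun j _ => by linarith [(hφ j).2]
  -- bound on logπ
  have hbound : ∀ S : Finset (Fin p), logπ S ≥ -(S.card : ℝ) * c := by
    intro S
    rw [hlogπ S]
    have h1 : Real.log (Nat.choose p S.card) ≤ (S.card : ℝ) * Real.log p := by
      have hle : (Nat.choose p S.card : ℝ) ≤ (p : ℝ) ^ (S.card : ℕ) := by
        exact_mod_cast Nat.choose_le_pow p S.card
      calc Real.log (Nat.choose p S.card) ≤ Real.log ((p : ℝ) ^ (S.card : ℕ)) := by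
            apply Real.log_le_log _ hle
            exact_mod_cast Nat.choose_pos (by
              simpa using Finset.card_le_card (Finset.subset_univ S) |>.trans_eq
                (by simp))
        _ = (S.card : ℝ) * Real.log p := by rw [Real.log_pow]
    have hs : (0 : ℝ) ≤ S.card := Nat.cast_nonneg _
    nlinarith
  -- key identity
  have hkey : ∑ S : Finset (Fin p), bernoulliMass φ S * (S.card : ℝ)
      = ∑ j : Fin p, φ j := by
    have := mass_sum_card (Finset.univ : Finset (Fin p)) φ
    have huniv : (Finset.univ : Finset (Fin p)).powerset = Finset.univ :=
      Finset.powerset_univ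
    rw [huniv] at this
    rw [← this]
    apply Finset.sum_congr rfl
    intro S _
    simp [bernoulliMass, Finset.compl_eq_univ_sdiff]
  calc ∑ S : Finset (Fin p), bernoulliMass φ S * logπ S
      ≥ ∑ S : Finset (Fin p), bernoulliMass φ S * (-(S.card : ℝ) * c) := by
        apply Finset.sum_le_sum
        intro S _
        exact mul_le_mul_of_nonneg_left (hbound S) (hmass S)
    _ = -c * ∑ S : Finset (Fin p), bernoulliMass φ S * (S.card : ℝ) := by
        rw [Finset.mul_sum]; apply Finset.sum_congr rfl; intro S _; ring
    _ = - ∑ j : Fin p, φ j * c := by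
        rw [hkey, Finset.mul_sum, ← Finset.sum_neg_distrib]
        apply Finset.sum_congr rfl; intro j _; ring
end

section
/- (Derivative identity underlying the CAVI update, Equation (9).) Let n ∈ ℕ, p ≥ 1, X ∈ ℝ^{n×p}, y ∈ {0,1}^n, β̃ ∈ ℝ^p, a > 0, α > 0, γ > 0, η ∈ ℝ^n with η_i ≠ 0 for all i, fix an index j ∈ {0,...,p−1} and values φ_k ∈ (0,1) for k ≠ j. For t ∈ (0,1) let φ(t) denote the vector with j-th coordinate t and k-th coordinate φ_k for k ≠ j, and define F(t) = −Σ_k φ(t)_k [ 1 + log p + a log p − (1/2) log(1+αγ) ] + α Σ_{i=1}^n { log( exp(η_i)/(1+exp(η_i)) ) − η_i/2 + (y_i − 1/2) m_i(t) − ( tanh(η_i/2)/(4η_i) ) [ v_i(t) + m_i(t)² − η_i² ] } − Σ_k [ φ(t)_k log φ(t)_k + (1−φ(t)_k) log(1−φ(t)_k) ], where m_i(t) = Σ_k φ(t)_k x_{ik} β̃_k and v_i(t) = Σ_k φ(t)_k (1−φ(t)_k) x_{ik}² β̃_k². Then for every t ∈ (0,1), F is differentiable at t with F′(t) = ω_j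 − log( t/(1−t) ), where ω_j = α β̃_j Σ_{i=1}^n (y_i − 1/2) x_{ij} − (α β̃_j / 4) Σ_{i=1}^n (1/η_i) tanh(η_i/2) ( x_{ij}² β̃_j + 2 x_{ij} Σ_{k≠j} φ_k x_{ik} β̃_k ) + (1/2) log(1+αγ) − (a+1) log p − 1. In particular, ω_j does not depend on t. -/
/-!
Only the `j`-th Bernoulli coordinate varies, so every sum over coordinates changes by its `j`-th
summand alone. The mean `m_i` is therefore affine in `t`, and so is the second moment `v_i + m_i ^ 2`,
because the Bernoulli variance `t (1 - t)` and the squared mean `t ^ 2` add up to `t`. Hence `F` is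
an affine function of slope `ω` plus the binary entropy of `t`, whose derivative is `-log (t / (1 - t))`.
-/

open Finset Real Function

section UpdateSums

variable {ι : Type*} [Fintype ι] [DecidableEq ι]

theorem sum_apply_update_sub_sum_apply_update {α M : Type*} [AddCommGroup M] (g : ι → α → M)
    (φ : ι → α) (j : ι) (t s : α) :
    ∑ k, g k (update φ j t k) - ∑ k, g k (update φ j s k) = g j t - g j s := by
  simp only [apply_update g, sum_update_of_mem (mem_univ j)]
  abel

theorem sum_var_add_sq_sum_mean_update_sub (φ x β : ι → ℝ) (j : ι) (t : ℝ) :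
    (∑ k, update φ j t k * (1 - update φ j t k) * x k ^ 2 * β k ^ 2
        + (∑ k, update φ j t k * x k * β k) ^ 2)
      - (∑ k, update φ j 0 k * (1 - update φ j 0 k) * x k ^ 2 * β k ^ 2
        + (∑ k, update φ j 0 k * x k * β k) ^ 2)
      = t * (β j * (x j ^ 2 * β j + 2 * x j * ∑ k ∈ univ.erase j, φ k * x k * β k)) := by
  have hvar := sum_apply_update_sub_sum_apply_update
    (fun k s => s * (1 - s) * x k ^ 2 * β k ^ 2) φ j t 0
  have hmean := sum_apply_update_sub_sum_apply_update (fun k s => s * x k * β k) φ j t 0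
  have hmean₀ : ∑ k, update φ j 0 k * x k * β k = ∑ k ∈ univ.erase j, φ k * x k * β k := by
    simp only [apply_update (fun k s => s * x k * β k), sum_update_of_mem (mem_univ j), zero_mul,
      zero_add, sdiff_singleton_eq_erase]
  rw [← hmean₀]
  linear_combination hvar + (∑ k, update φ j t k * x k * β k
    + ∑ k, update φ j 0 k * x k * β k + t * x j * β j) * hmean

end UpdateSums

theorem mul_log_add_one_sub_mul_log_one_sub (t : ℝ) :
    t * log t + (1 - t) * log (1 - t) = -binEntropy t := by
  simp only [binEntropy, log_inv]
  ring

-- The summand is the Jaakkola–Jordan quadratic lower bound on `log σ x` at `η`, in expectation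
-- over `x` with mean `m` and second moment `q`.
theorem sum_logisticBound_sub_sum_logisticBound {κ : Type*} [Fintype κ]
    (c y η m m' q q' x S : κ → ℝ) {s b : ℝ}
    (hm : ∀ i, m' i - m i = s * (x i * b))
    (hq : ∀ i, q' i - q i = s * (b * (x i ^ 2 * b + 2 * x i * S i))) :
    ∑ i, (c i + (y i - 1 / 2) * m' i - tanh (η i / 2) / (4 * η i) * (q' i - η i ^ 2))
      - ∑ i, (c i + (y i - 1 / 2) * m i - tanh (η i / 2) / (4 * η i) * (q i - η i ^ 2))
      = s * (b * ∑ i, (y i - 1 / 2) * x i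
        - b / 4 * ∑ i, 1 / η i * tanh (η i / 2) * (x i ^ 2 * b + 2 * x i * S i)) := by
  rw [← sum_sub_distrib, mul_sum, mul_sum, ← sum_sub_distrib, mul_sum]
  exact sum_congr rfl fun i _ => by
    linear_combination (y i - 1 / 2) * hm i - tanh (η i / 2) / (4 * η i) * hq i

theorem hasDerivAt_of_sub_eq_affine_add_binEntropy {f : ℝ → ℝ} {ω : ℝ}
    (hf : ∀ s, f s - f 0 = ω * s + binEntropy s) {t : ℝ} (ht : t ∈ Set.Ioo (0 : ℝ) 1) :
    HasDerivAt f (ω - log (t / (1 - t))) t := by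
  obtain ⟨ht0, ht1⟩ := ht
  have hf' : f = fun s => f 0 + ω * s + binEntropy s := funext fun s => by linarith [hf s]
  rw [hf', log_div ht0.ne' (sub_ne_zero.mpr ht1.ne'), sub_sub_eq_add_sub, ← add_sub]
  simpa using
    (((hasDerivAt_id t).const_mul ω).const_add (f 0)).fun_add (hasDerivAt_binEntropy ht0.ne' ht1.ne)

theorem stmt_13_general (n p : ℕ) (X : Fin n → Fin p → ℝ) (y : Fin n → ℝ)
    (βt : Fin p → ℝ)
    (a α γ : ℝ)
    (η : Fin n → ℝ)
    (j : Fin p) (φ : Fin p → ℝ)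
    -- `Φ t` is the variational parameter vector with `j`-th coordinate `t`
    -- and the other coordinates fixed at `φ k`
    (Φ : ℝ → Fin p → ℝ) (hΦ : ∀ t k, Φ t k = if k = j then t else φ k)
    (m v : ℝ → Fin n → ℝ)
    (hm : ∀ t i, m t i = ∑ k : Fin p, Φ t k * X i k * βt k)
    (hv : ∀ t i, v t i = ∑ k : Fin p, Φ t k * (1 - Φ t k) * (X i k) ^ 2 * (βt k) ^ 2)
    -- the closed-form ELBO objective as a function of the single coordinate `t`
    (F : ℝ → ℝ)
    (hF : ∀ t, F t =
      - (∑ k : Fin p, Φ t k * (1 + Real.log p + a * Real.log p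
            - (1 / 2) * Real.log (1 + α * γ)))
      + α * ∑ i : Fin n,
          (Real.log (Real.exp (η i) / (1 + Real.exp (η i))) - η i / 2
            + (y i - 1 / 2) * m t i
            - (Real.tanh (η i / 2) / (4 * η i)) * (v t i + (m t i) ^ 2 - (η i) ^ 2))
      - ∑ k : Fin p, (Φ t k * Real.log (Φ t k) + (1 - Φ t k) * Real.log (1 - Φ t k)))
    (ω : ℝ)
    (hω : ω = α * βt j * (∑ i : Fin n, (y i - 1 / 2) * X i j)
      - (α * βt j / 4) * ∑ i : Fin n, (1 / η i) * Real.tanh (η i / 2)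
          * ((X i j) ^ 2 * βt j + 2 * X i j * ∑ k ∈ Finset.univ.erase j, φ k * X i k * βt k)
      + (1 / 2) * Real.log (1 + α * γ) - (a + 1) * Real.log p - 1) :
    ∀ t ∈ Set.Ioo (0 : ℝ) 1, HasDerivAt F (ω - Real.log (t / (1 - t))) t := by
  have hΦ' : ∀ s, Φ s = update φ j s := fun s => funext fun k => by rw [hΦ, update_apply]
  simp only [mul_log_add_one_sub_mul_log_one_sub, sum_neg_distrib, hΦ'] at hF
  set C := 1 + log p + a * log p - (1 / 2) * log (1 + α * γ)
  refine fun t ht => hasDerivAt_of_sub_eq_affine_add_binEntropy (fun s => ?_) ht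
  have hmean : ∀ i, m s i - m 0 i = s * (X i j * βt j) := fun i => by
    rw [hm, hm, hΦ', hΦ', sum_apply_update_sub_sum_apply_update (fun k s => s * X i k * βt k)]
    ring
  have hsecond : ∀ i, v s i + m s i ^ 2 - (v 0 i + m 0 i ^ 2)
      = s * (βt j * (X i j ^ 2 * βt j + 2 * X i j * ∑ k ∈ univ.erase j, φ k * X i k * βt k)) :=
    fun i => by
      simp only [hm, hv, hΦ']
      exact sum_var_add_sq_sum_mean_update_sub φ (X i) βt j s
  have hpenalty : ∑ k, update φ j s k * C - ∑ k, update φ j 0 k * C = s * C := by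
    rw [sum_apply_update_sub_sum_apply_update (fun _ s => s * C)]
    ring
  have hentropy : ∑ k, binEntropy (update φ j s k) - ∑ k, binEntropy (update φ j 0 k)
      = binEntropy s := by
    rw [sum_apply_update_sub_sum_apply_update (fun _ => binEntropy), binEntropy_zero, sub_zero]
  have hlik := sum_logisticBound_sub_sum_logisticBound
    (fun i => log (exp (η i) / (1 + exp (η i))) - η i / 2) y η _ _ _ _ _ _ hmean hsecond
  rw [hF s, hF 0, hω]
  linear_combination -hpenalty + α * hlik + hentropy

theorem stmt_13 (n p : ℕ) (hp : 1 ≤ p) (X : Fin n → Fin p → ℝ) (y : Fin n → ℝ)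
    (hy : ∀ i, y i = 0 ∨ y i = 1) (βt : Fin p → ℝ)
    (a α γ : ℝ) (ha : 0 < a) (hα : 0 < α) (hγ : 0 < γ)
    (η : Fin n → ℝ) (hη : ∀ i, η i ≠ 0)
    (j : Fin p) (φ : Fin p → ℝ) (hφ : ∀ k, k ≠ j → φ k ∈ Set.Ioo (0 : ℝ) 1)
    -- `Φ t` is the variational parameter vector with `j`-th coordinate `t`
    -- and the other coordinates fixed at `φ k`
    (Φ : ℝ → Fin p → ℝ) (hΦ : ∀ t k, Φ t k = if k = j then t else φ k)
    (m v : ℝ → Fin n → ℝ)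
    (hm : ∀ t i, m t i = ∑ k : Fin p, Φ t k * X i k * βt k)
    (hv : ∀ t i, v t i = ∑ k : Fin p, Φ t k * (1 - Φ t k) * (X i k) ^ 2 * (βt k) ^ 2)
    -- the closed-form ELBO objective as a function of the single coordinate `t`
    (F : ℝ → ℝ)
    (hF : ∀ t, F t =
      - (∑ k : Fin p, Φ t k * (1 + Real.log p + a * Real.log p
            - (1 / 2) * Real.log (1 + α * γ)))
      + α * ∑ i : Fin n,
          (Real.log (Real.exp (η i) / (1 + Real.exp (η i))) - η i / 2
            + (y i - 1 / 2) * m t i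
            - (Real.tanh (η i / 2) / (4 * η i)) * (v t i + (m t i) ^ 2 - (η i) ^ 2))
      - ∑ k : Fin p, (Φ t k * Real.log (Φ t k) + (1 - Φ t k) * Real.log (1 - Φ t k)))
    (ω : ℝ)
    (hω : ω = α * βt j * (∑ i : Fin n, (y i - 1 / 2) * X i j)
      - (α * βt j / 4) * ∑ i : Fin n, (1 / η i) * Real.tanh (η i / 2)
          * ((X i j) ^ 2 * βt j + 2 * X i j * ∑ k ∈ Finset.univ.erase j, φ k * X i k * βt k)
      + (1 / 2) * Real.log (1 + α * γ) - (a + 1) * Real.log p - 1) :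
    ∀ t ∈ Set.Ioo (0 : ℝ) 1, HasDerivAt F (ω - Real.log (t / (1 - t))) t :=
  stmt_13_general n p X y βt a α γ η j φ Φ hΦ m v hm hv F hF ω hω
end
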